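/- For a probability distribution (p₁,...,pₙ) and density matrices ρ₁,...,ρₙ on a finite-dimensional Hilbert space, S(∑ᵢ pᵢρᵢ) ≤ ∑ᵢ pᵢ·S(ρᵢ) + H(p), where H(p) = -∑ᵢ pᵢ log₂ pᵢ is the Shannon entropy of the distribution. -/

import Mathlib

open scoped ComplexOrder

/-- Von Neumann entropy (in bits) of a Hermitian matrix, via its eigenvalues. -/
noncomputable def vnEntropy {d : ℕ} {ρ : Matrix (Fin d) (Fin d) ℂ} (h : ρ.IsHermitian) : ℝ :=
  (∑ i, Real.negMulLog (h.eigenvalues i)) / Real.log 2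

/-- Shannon entropy (in bits) of a probability vector. -/
noncomputable def shannonEntropy {n : ℕ} (p : Fin n → ℝ) : ℝ :=
  (∑ i, Real.negMulLog (p i)) / Real.log 2

/-!
Write `ρᵢ = Fᵢ Fᵢᴴ` with `Fᵢᴴ Fᵢ = diag λᵢ` (the eigenvectors of `ρᵢ` scaled by `√λᵢⱼ`) and put
the blocks `√pᵢ Fᵢ` side by side into one matrix `M`. Then `∑ pᵢ ρᵢ = M Mᴴ`, while the Gram
matrix `Mᴴ M` has diagonal `(pᵢ λᵢⱼ)ᵢⱼ`. The matrices `M Mᴴ` and `Mᴴ M` have the same nonzero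
spectrum, and the entropy of the spectrum of a Hermitian matrix is at most the entropy of its
diagonal, because the diagonal is the image of the spectrum under the doubly stochastic matrix
`(|Uⱼₖ|²)` of an eigenbasis. Finally the entropy of `(pᵢ λᵢⱼ)ᵢⱼ` splits as
`H(p) + ∑ pᵢ H(λᵢ)` because each `λᵢ` sums to `1`.
-/

open Matrix Real

lemma ConcaveOn.sum_le_sum_mulVec_of_mem_doublyStochastic {n : Type*} [Fintype n]
    [DecidableEq n] {f : ℝ → ℝ} {s : Set ℝ} (hf : ConcaveOn ℝ s f) {W : Matrix n n ℝ}
    (hW : W ∈ doublyStochastic ℝ n) {x : n → ℝ} (hx : ∀ i, x i ∈ s) :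
    ∑ i, f (x i) ≤ ∑ i, f ((W *ᵥ x) i) := by
  obtain ⟨hW0, hrow, hcol⟩ := mem_doublyStochastic_iff_sum.mp hW
  calc ∑ j, f (x j) = ∑ i, ∑ j, W i j * f (x j) := by
        rw [Finset.sum_comm]; simp [← Finset.sum_mul, hcol]
    _ ≤ ∑ i, f ((W *ᵥ x) i) := Finset.sum_le_sum fun i _ => by
        simpa [mulVec, dotProduct] using
          hf.le_map_sum (fun j _ => hW0 i j) (hrow i) (fun j _ => hx j)

namespace Matrix

section blockCols

variable {α κ m n : Type*}

def blockCols (G : κ → Matrix m n α) : Matrix m (κ × n) α := of fun i q => G q.1 i q.2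

variable [NonUnitalSemiring α] [Star α]

lemma blockCols_mul_conjTranspose [Fintype κ] [Fintype n] (G : κ → Matrix m n α) :
    blockCols G * (blockCols G)ᴴ = ∑ k, G k * (G k)ᴴ := by
  ext i j
  simp [blockCols, mul_apply, sum_apply, Fintype.sum_prod_type]

lemma conjTranspose_blockCols_mul_apply [Fintype m] (G : κ → Matrix m n α) (q r : κ × n) :
    ((blockCols G)ᴴ * blockCols G) q r = ((G q.1)ᴴ * G r.1) q.2 r.2 := by
  simp [blockCols, mul_apply]

end blockCols

variable {𝕜 κ m n : Type*} [RCLike 𝕜] [Fintype m] [DecidableEq m] [Fintype n] [DecidableEq n]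

lemma norm_sq_entries_mem_doublyStochastic {U : Matrix n n 𝕜} (hU : U ∈ unitaryGroup n 𝕜) :
    of (fun i j => ‖U i j‖ ^ 2) ∈ doublyStochastic ℝ n := by
  have hrow (i : n) : ∑ j, ‖U i j‖ ^ 2 = 1 := by
    have := congrArg (fun N => RCLike.re (N i i)) (mem_unitaryGroup_iff.mp hU)
    simpa [mul_apply, ← RCLike.normSq_eq_def', RCLike.mul_conj] using this
  have hcol (j : n) : ∑ i, ‖U i j‖ ^ 2 = 1 := by
    have := congrArg (fun N => RCLike.re (N j j)) (mem_unitaryGroup_iff'.mp hU)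
    simpa [mul_apply, RCLike.conj_mul] using this
  exact mem_doublyStochastic_iff_sum.mpr ⟨fun i j => sq_nonneg _, hrow, hcol⟩

lemma IsHermitian.re_diag_eq_mulVec_eigenvalues {A : Matrix n n 𝕜} (hA : A.IsHermitian) :
    (fun i => RCLike.re (A i i)) =
      of (fun i j => ‖(hA.eigenvectorUnitary : Matrix n n 𝕜) i j‖ ^ 2) *ᵥ hA.eigenvalues := by
  ext i
  conv_lhs => rw [hA.spectral_theorem, Unitary.conjStarAlgAut_apply]
  rw [mul_apply, map_sum]
  simp only [mul_diagonal, star_apply, Function.comp_apply, mulVec, dotProduct, of_apply]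
  refine Finset.sum_congr rfl fun k _ => ?_
  rw [mul_right_comm, RCLike.star_def, RCLike.mul_conj]
  norm_cast

lemma IsHermitian.sum_map_eigenvalues_le_sum_map_diag {f : ℝ → ℝ} {s : Set ℝ}
    (hf : ConcaveOn ℝ s f) {A : Matrix n n 𝕜} (hA : A.IsHermitian)
    (hs : ∀ i, hA.eigenvalues i ∈ s) : ∑ i, f (hA.eigenvalues i) ≤ ∑ i, f (RCLike.re (A i i)) := by
  have hdiag (i : n) : RCLike.re (A i i) = _ := congrFun hA.re_diag_eq_mulVec_eigenvalues i
  simpa only [hdiag] using ConcaveOn.sum_le_sum_mulVec_of_mem_doublyStochastic hf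
    (norm_sq_entries_mem_doublyStochastic hA.eigenvectorUnitary.2) hs

open Polynomial in
lemma sum_map_eigenvalues_mul_comm {f : ℝ → ℝ} (hf : f 0 = 0) (A : Matrix m n 𝕜)
    (B : Matrix n m 𝕜) (hAB : (A * B).IsHermitian) (hBA : (B * A).IsHermitian) :
    ∑ i, f (hAB.eigenvalues i) = ∑ j, f (hBA.eigenvalues j) := by
  have h := congrArg (fun p : 𝕜[X] => ((p.roots.map RCLike.re).map f).sum)
    (charpoly_mul_comm' A B)
  rw [roots_mul (mul_ne_zero (pow_ne_zero _ X_ne_zero) (charpoly_monic _).ne_zero),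
    roots_mul (mul_ne_zero (pow_ne_zero _ X_ne_zero) (charpoly_monic _).ne_zero),
    roots_X_pow, roots_X_pow, hAB.roots_charpoly_eq_eigenvalues,
    hBA.roots_charpoly_eq_eigenvalues] at h
  simp only [Multiset.map_add, Multiset.map_nsmul, Multiset.map_singleton, Multiset.sum_add,
    Multiset.sum_nsmul, Multiset.sum_singleton, map_zero, hf, smul_zero, zero_add,
    Multiset.map_map, Function.comp_def, RCLike.ofReal_re] at h
  exact h

lemma PosSemidef.exists_mul_conjTranspose_eq {A : Matrix n n 𝕜} (hA : A.PosSemidef) :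
    ∃ F : Matrix n n 𝕜, F * Fᴴ = A ∧
      Fᴴ * F = diagonal (RCLike.ofReal ∘ hA.isHermitian.eigenvalues) := by
  set U : Matrix n n 𝕜 := (hA.isHermitian.eigenvectorUnitary : Matrix n n 𝕜)
  have hU : Uᴴ * U = 1 := Unitary.star_mul_self_of_mem hA.isHermitian.eigenvectorUnitary.2
  set D : Matrix n n 𝕜 := diagonal (RCLike.ofReal ∘ sqrt ∘ hA.isHermitian.eigenvalues)
  have hD : Dᴴ = D := by simp [D, diagonal_conjTranspose]
  have hDD : D * D = diagonal (RCLike.ofReal ∘ hA.isHermitian.eigenvalues) := by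
    simp only [D, diagonal_mul_diagonal, Function.comp_apply, ← RCLike.ofReal_mul,
      mul_self_sqrt (hA.eigenvalues_nonneg _)]
    rfl
  refine ⟨U * D, ?_, ?_⟩
  · conv_rhs => rw [hA.isHermitian.spectral_theorem, Unitary.conjStarAlgAut_apply]
    rw [conjTranspose_mul, hD, Matrix.mul_assoc, ← Matrix.mul_assoc D, hDD, star_eq_conjTranspose,
      Matrix.mul_assoc]
  · rw [conjTranspose_mul, hD, Matrix.mul_assoc, ← Matrix.mul_assoc Uᴴ, hU, Matrix.one_mul, hDD]

lemma sum_map_eigenvalues_le_of_eq_mul_conjTranspose {f : ℝ → ℝ}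
    (hf : ConcaveOn ℝ (Set.Ici 0) f) (hf0 : f 0 = 0) {S : Matrix m m 𝕜} (hS : S.IsHermitian)
    (M : Matrix m n 𝕜) (hSM : S = M * Mᴴ) :
    ∑ i, f (hS.eigenvalues i) ≤ ∑ j, f (RCLike.re ((Mᴴ * M) j j)) := by
  subst hSM
  have hMM := posSemidef_conjTranspose_mul_self M
  rw [sum_map_eigenvalues_mul_comm hf0 M Mᴴ hS hMM.isHermitian]
  exact hMM.isHermitian.sum_map_eigenvalues_le_sum_map_diag hf hMM.eigenvalues_nonneg

lemma PosSemidef.sum_eigenvalues_eq_one {A : Matrix n n 𝕜} (hA : A.PosSemidef)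
    (htr : A.trace = 1) : ∑ i, hA.isHermitian.eigenvalues i = 1 := by
  have := hA.isHermitian.trace_eq_sum_eigenvalues
  rw [htr] at this
  exact_mod_cast this.symm

variable [Fintype κ]

lemma exists_mul_conjTranspose_eq_sum_smul (p : κ → ℝ) (hp : ∀ k, 0 ≤ p k)
    (ρ : κ → Matrix n n 𝕜) (hρ : ∀ k, (ρ k).PosSemidef) :
    ∃ M : Matrix n (κ × n) 𝕜, M * Mᴴ = ∑ k, (p k : 𝕜) • ρ k ∧
      ∀ q, RCLike.re ((Mᴴ * M) q q) = p q.1 * (hρ q.1).isHermitian.eigenvalues q.2 := by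
  choose F hFF hFdiag using fun k => (hρ k).exists_mul_conjTranspose_eq
  have hsqrt (k : κ) : star (√(p k) : 𝕜) * √(p k) = p k := by
    rw [RCLike.star_def, RCLike.conj_ofReal, ← RCLike.ofReal_mul, mul_self_sqrt (hp k)]
  refine ⟨blockCols fun k => (√(p k) : 𝕜) • F k, ?_, fun q => ?_⟩
  · simp only [blockCols_mul_conjTranspose, conjTranspose_smul, smul_mul_smul_comm, hFF,
      mul_comm _ (star _), hsqrt]
  · rw [conjTranspose_blockCols_mul_apply, conjTranspose_smul, smul_mul_smul_comm, hsqrt, hFdiag]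
    simp

end Matrix

lemma Real.sum_negMulLog_mul_of_sum_eq_one {κ n : Type*} [Fintype κ] [Fintype n] (p : κ → ℝ)
    (q : κ → n → ℝ) (hq : ∀ k, ∑ j, q k j = 1) :
    ∑ x : κ × n, negMulLog (p x.1 * q x.1 x.2) =
      ∑ k, negMulLog (p k) + ∑ k, p k * ∑ j, negMulLog (q k j) := by
  simp only [Fintype.sum_prod_type, negMulLog_mul, Finset.sum_add_distrib, ← Finset.sum_mul,
    ← Finset.mul_sum, hq, one_mul]

theorem vnEntropy_mix_le_general {n d : ℕ} (p : Fin n → ℝ) (ρ : Fin n → Matrix (Fin d) (Fin d) ℂ)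
    (hp : ∀ i, 0 ≤ p i)
    (hρ : ∀ i, (ρ i).PosSemidef) (htr : ∀ i, (ρ i).trace = 1)
    (hmix : (∑ i, (p i : ℂ) • ρ i).IsHermitian) :
    vnEntropy hmix ≤ ∑ i, p i * vnEntropy (hρ i).isHermitian + shannonEntropy p := by
  obtain ⟨M, hM, hdiag⟩ := exists_mul_conjTranspose_eq_sum_smul p hp ρ hρ
  have key : ∑ k, negMulLog (hmix.eigenvalues k) ≤
      ∑ i, negMulLog (p i) + ∑ i, p i * ∑ j, negMulLog ((hρ i).isHermitian.eigenvalues j) := by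
    calc ∑ k, negMulLog (hmix.eigenvalues k)
        ≤ ∑ q, negMulLog (RCLike.re ((Mᴴ * M) q q)) :=
          sum_map_eigenvalues_le_of_eq_mul_conjTranspose concaveOn_negMulLog negMulLog_zero
            hmix M hM.symm
      _ = _ := by
          simp only [hdiag]
          exact sum_negMulLog_mul_of_sum_eq_one _ _ fun i => (hρ i).sum_eigenvalues_eq_one (htr i)
  calc vnEntropy hmix
      ≤ (∑ i, negMulLog (p i) + ∑ i, p i * ∑ j, negMulLog ((hρ i).isHermitian.eigenvalues j))
          / log 2 := div_le_div_of_nonneg_right key (log_pos one_lt_two).le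
    _ = _ := by
        simp only [vnEntropy, shannonEntropy, add_div, Finset.sum_div, mul_div_assoc, add_comm]

theorem vnEntropy_mix_le {n d : ℕ} (p : Fin n → ℝ) (ρ : Fin n → Matrix (Fin d) (Fin d) ℂ)
    (hp : ∀ i, 0 ≤ p i) (hp1 : ∑ i, p i = 1)
    (hρ : ∀ i, (ρ i).PosSemidef) (htr : ∀ i, (ρ i).trace = 1)
    (hmix : (∑ i, (p i : ℂ) • ρ i).IsHermitian) :
    vnEntropy hmix ≤ ∑ i, p i * vnEntropy (hρ i).isHermitian + shannonEntropy p :=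
  vnEntropy_mix_le_general p ρ hp hρ htr hmix
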